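/- For every n ≥ 1, the left-nested self-application Sₗ^{2n+1} of the combinator S = λx.λy.λz. x z (y z) is βη-equal to λx.λy. (x y)^n (λz. x z (y z)), where (x y)^n denotes n-fold application of x y. In particular S does not have the ρ-property (the normal forms of Sₗ^k for odd k are pairwise distinct). -/

import Mathlib

/-- Untyped lambda terms in de Bruijn representation. -/
inductive Lam : Type
  | var : Nat → Lam
  | app : Lam → Lam → Lam
  | lam : Lam → Lam
  deriving DecidableEq

namespace Lam

/-- Shift free variables `≥ d` up by one. -/
def lift (d : Nat) : Lam → Lam
  | var n => var (if n < d then n else n + 1)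
  | app a b => app (lift d a) (lift d b)
  | lam a => lam (lift (d + 1) a)

/-- Substitute `s` for variable `d` (and lower the variables above `d`). -/
def subst (d : Nat) (s : Lam) : Lam → Lam
  | var n => if n = d then s else if d < n then var (n - 1) else var n
  | app a b => app (subst d s a) (subst d s b)
  | lam a => lam (subst (d + 1) (lift 0 s) a)

/-- βη-equivalence of lambda terms. -/
inductive BetaEta : Lam → Lam → Prop
  | beta (t s : Lam) : BetaEta (app (lam t) s) (subst 0 s t)
  | eta (t : Lam) : BetaEta (lam (app (lift 0 t) (var 0))) t
  | refl (t : Lam) : BetaEta t t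
  | symm {t s : Lam} : BetaEta t s → BetaEta s t
  | trans {t s u : Lam} : BetaEta t s → BetaEta s u → BetaEta t u
  | congApp {t t' s s' : Lam} : BetaEta t t' → BetaEta s s' →
      BetaEta (app t s) (app t' s')
  | congLam {t t' : Lam} : BetaEta t t' → BetaEta (lam t) (lam t')

/-- The B combinator `λf.λg.λx. f (g x)`. -/
def B : Lam := lam (lam (lam (app (var 2) (app (var 1) (var 0)))))

/-- Left-nested self-application `X X ... X` with `k` copies (for `k ≥ 1`). -/
def sapp (X : Lam) : Nat → Lam
  | 0 => X
  | 1 => X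
  | k + 2 => app (sapp X (k + 1)) X

end Lam

namespace Lam

/-- S = λx.λy.λz. x z (y z) -/
def S : Lam := lam (lam (lam (app (app (var 2) (var 0)) (app (var 1) (var 0)))))

/-- n-fold application: npow e n a = e (e (... (e a))) -/
def npow (e : Lam) : Nat → Lam → Lam
  | 0, a => a
  | n + 1, a => app e (npow e n a)

/-!
Write `Tₙ = λx y. (x y)ⁿ (λz. x z (y z))`, so that `T₀ = S`. Two β-steps give
`Tₙ x y = (x y)ⁿ (λz. x z (y z))` for all `x y`; hence `S S Tₙ = Tₙ₊₁` and
`Tₙ S S = (S S)ⁿ (S S S) = (S S)ⁿ⁺¹ T₀ = Tₙ₊₁`, and `Sₗ^(2n+1) = Tₙ` by induction.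

The `Tₙ` are pairwise distinct βη-normal forms, so by the Church–Rosser theorem they are pairwise
not convertible. Church–Rosser is proved with Takahashi's method: parallel βη-reduction satisfies
`t ⇒ u → u ⇒ cd t` for the complete development `cd`. Finally, a conversion `Sₗ^i = Sₗ^(i+j)`
propagates by right multiplication to `Sₗ^(2i+1) = Sₗ^(2(i+j)+1)`, i.e. `Tᵢ = Tᵢ₊ⱼ`.
-/

local infix:50 " =βη " => BetaEta

instance : Trans BetaEta BetaEta BetaEta := ⟨.trans⟩

theorem lift_lift (t : Lam) {d e : Nat} (h : d ≤ e) :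
    lift d (lift e t) = lift (e + 1) (lift d t) := by
  induction t generalizing d e with
  | var n => grind [lift]
  | app a b iha ihb => simp only [lift, iha h, ihb h]
  | lam a ih => simp only [lift, ih (Nat.add_le_add_right h 1)]

@[simp]
theorem subst_lift (t s : Lam) (d : Nat) : subst d s (lift d t) = t := by
  induction t generalizing d s with
  | var n => grind [lift, subst]
  | app a b iha ihb => simp only [lift, subst, iha, ihb]
  | lam a ih => simp only [lift, subst, ih]

theorem lift_injective (d : Nat) : Function.Injective (lift d) := fun a b h => by
  rw [← subst_lift a (var 0) d, h, subst_lift]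

theorem lift_subst_of_le (t s : Lam) {d e : Nat} (h : d ≤ e) :
    lift d (subst e s t) = subst (e + 1) (lift d s) (lift d t) := by
  induction t generalizing d e s with
  | var n => grind [lift, subst]
  | app a b iha ihb => simp only [lift, subst, iha _ h, ihb _ h]
  | lam a ih =>
    simp only [lift, subst, ih _ (Nat.add_le_add_right h 1), lift_lift s (Nat.zero_le d)]

theorem lift_subst_of_ge (t s : Lam) {d e : Nat} (h : e ≤ d) :
    lift d (subst e s t) = subst e (lift d s) (lift (d + 1) t) := by
  induction t generalizing d e s with
  | var n => grind [lift, subst]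
  | app a b iha ihb => simp only [lift, subst, iha _ h, ihb _ h]
  | lam a ih =>
    simp only [lift, subst, ih _ (Nat.add_le_add_right h 1), lift_lift s (Nat.zero_le d)]

theorem subst_subst (t s s' : Lam) {d e : Nat} (h : d ≤ e) :
    subst e s' (subst d s t) = subst d (subst e s' s) (subst (e + 1) (lift d s') t) := by
  induction t generalizing d e s s' with
  | var n => grind [subst, subst_lift]
  | app a b iha ihb => simp only [subst, iha _ _ h, ihb _ _ h]
  | lam a ih =>
    simp only [subst, ih _ _ (Nat.add_le_add_right h 1), lift_subst_of_le s s' (Nat.zero_le e),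
      lift_lift s' (Nat.zero_le d)]

@[simp]
theorem subst_var_lift_succ (t : Lam) (d : Nat) : subst d (var d) (lift (d + 1) t) = t := by
  induction t generalizing d with
  | var n => grind [lift, subst]
  | app a b iha ihb => simp only [lift, subst, iha, ihb]
  | lam a ih => simp only [lift, subst, Nat.not_lt_zero, if_false, ih]

theorem lift_succ_eq_lift {f r : Lam} {d e : Nat} (he : e ≤ d) (h : lift (d + 1) f = lift e r) :
    ∃ g, f = lift e g ∧ r = lift d g := by
  induction f generalizing r d e with
  | var n =>
    cases r <;> simp only [lift, reduceCtorEq, var.injEq] at h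
    refine ⟨var (if n < e then n else n - 1), ?_, ?_⟩ <;>
      simp only [lift, var.injEq] <;> split_ifs at * <;> omega
  | app a b iha ihb =>
    cases r <;> simp only [lift, reduceCtorEq, app.injEq] at h
    obtain ⟨g₁, rfl, rfl⟩ := iha he h.1
    obtain ⟨g₂, rfl, rfl⟩ := ihb he h.2
    exact ⟨app g₁ g₂, rfl, rfl⟩
  | lam a ih =>
    cases r <;> simp only [lift, reduceCtorEq, lam.injEq] at h
    obtain ⟨g, rfl, rfl⟩ := ih (Nat.add_le_add_right he 1) h
    exact ⟨lam g, rfl, rfl⟩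

theorem subst_npow (d : Nat) (s e a : Lam) (n : Nat) :
    subst d s (npow e n a) = npow (subst d s e) n (subst d s a) := by
  induction n with
  | zero => rfl
  | succ n ih => simp only [npow, subst, ih]

theorem lift_npow (d : Nat) (e a : Lam) (n : Nat) :
    lift d (npow e n a) = npow (lift d e) n (lift d a) := by
  induction n with
  | zero => rfl
  | succ n ih => simp only [npow, lift, ih]

def size : Lam → Nat
  | var _ => 1
  | app a b => size a + size b + 1
  | lam a => size a + 1

@[simp]
theorem size_lift (t : Lam) (d : Nat) : size (lift d t) = size t := by
  induction t generalizing d <;> simp only [lift, size, *]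

theorem size_npow (e a : Lam) (n : Nat) : size (npow e n a) = n * (size e + 1) + size a := by
  induction n with
  | zero => simp only [npow, Nat.zero_mul, Nat.zero_add]
  | succ n ih => simp only [npow, size, ih]; ring

/-- Parallel βη-reduction. -/
inductive Par : Lam → Lam → Prop
  | var (n : Nat) : Par (var n) (var n)
  | app {a a' b b' : Lam} : Par a a' → Par b b' → Par (app a b) (app a' b')
  | lam {a a' : Lam} : Par a a' → Par (lam a) (lam a')
  | beta {t t' s s' : Lam} : Par t t' → Par s s' → Par (app (lam t) s) (subst 0 s' t')
  | eta {t t' : Lam} : Par t t' → Par (lam (app (lift 0 t) (var 0))) t'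

namespace Par

theorem refl (t : Lam) : Par t t := by
  induction t with
  | var n => exact .var n
  | app a b iha ihb => exact .app iha ihb
  | lam a ih => exact .lam ih

theorem lift {t u : Lam} (h : Par t u) (d : Nat) : Par (lift d t) (lift d u) := by
  induction h generalizing d with
  | var n => exact refl _
  | app _ _ iha ihb => exact .app (iha d) (ihb d)
  | lam _ ih => exact .lam (ih (d + 1))
  | beta _ _ iht ihs =>
    rw [lift_subst_of_ge _ _ (Nat.zero_le d)]
    exact .beta (iht (d + 1)) (ihs d)
  | eta _ ih =>
    have he := Par.eta (ih d)
    rwa [lift_lift _ (Nat.zero_le d)] at he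

theorem subst {t t' s s' : Lam} (ht : Par t t') (hs : Par s s') (d : Nat) :
    Par (subst d s t) (subst d s' t') := by
  induction ht generalizing d s s' with
  | var n => simp only [Lam.subst]; split_ifs <;> first | exact hs | exact refl _
  | app _ _ iha ihb => exact .app (iha hs d) (ihb hs d)
  | lam _ ih => exact .lam (ih (hs.lift 0) (d + 1))
  | beta _ _ iht ihs =>
    rw [subst_subst _ _ _ (Nat.zero_le d)]
    exact .beta (iht (hs.lift 0) (d + 1)) (ihs hs d)
  | eta _ ih =>
    have he := Par.eta (ih hs d)
    rwa [lift_subst_of_le _ _ (Nat.zero_le d)] at he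

theorem lift_inv {d : Nat} {t u : Lam} (h : Par (Lam.lift d t) u) :
    ∃ u', u = Lam.lift d u' ∧ Par t u' := by
  generalize hx : Lam.lift d t = x at h
  induction h generalizing d t with
  | var n => exact ⟨t, hx.symm, refl t⟩
  | app _ _ iha ihb =>
    cases t <;> simp only [Lam.lift, reduceCtorEq, Lam.app.injEq] at hx
    obtain ⟨u₁, rfl, h₁⟩ := iha hx.1
    obtain ⟨u₂, rfl, h₂⟩ := ihb hx.2
    exact ⟨.app u₁ u₂, rfl, .app h₁ h₂⟩
  | lam _ ih =>
    cases t <;> simp only [Lam.lift, reduceCtorEq, Lam.lam.injEq] at hx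
    obtain ⟨u₁, rfl, h₁⟩ := ih hx
    exact ⟨.lam u₁, rfl, .lam h₁⟩
  | beta _ _ iht ihs =>
    rcases t with _ | ⟨_ | _ | p, q⟩ | _ <;>
      simp only [Lam.lift, reduceCtorEq, Lam.app.injEq, Lam.lam.injEq, false_and] at hx
    obtain ⟨u₁, rfl, h₁⟩ := iht hx.1
    obtain ⟨u₂, rfl, h₂⟩ := ihs hx.2
    exact ⟨Lam.subst 0 u₂ u₁, (lift_subst_of_ge _ _ (Nat.zero_le d)).symm, .beta h₁ h₂⟩
  | eta _ ih =>
    rcases t with _ | _ | ⟨_ | ⟨p, k | _ | _⟩ | _⟩ <;>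
      simp only [Lam.lift, reduceCtorEq, Lam.app.injEq, Lam.lam.injEq, Lam.var.injEq,
        and_false] at hx
    obtain ⟨hp, hk⟩ := hx
    obtain rfl : k = 0 := by grind
    obtain ⟨g, rfl, rfl⟩ := lift_succ_eq_lift (Nat.zero_le d) hp
    obtain ⟨u', rfl, h⟩ := ih rfl
    exact ⟨u', rfl, .eta h⟩

end Par

open Classical in
/-- The complete development: all β- and η-redexes of `t` contracted at once. -/
noncomputable def cd : Lam → Lam
  | var n => var n
  | app (lam b) s => subst 0 (cd s) (cd b)
  | app t s => app (cd t) (cd s)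
  | lam a => if h : ∃ g, a = app (lift 0 g) (var 0) then cd h.choose else lam (cd a)
termination_by t => size t
decreasing_by
  all_goals simp only [size]
  all_goals try omega
  have := congrArg size h.choose_spec
  simp only [size, size_lift] at this
  omega

theorem cd_app_lam (b s : Lam) : cd (app (lam b) s) = subst 0 (cd s) (cd b) := by
  rw [cd]

theorem cd_app {t : Lam} (ht : ∀ b, t ≠ lam b) (s : Lam) : cd (app t s) = app (cd t) (cd s) :=
  cd.eq_3 t s ht

theorem cd_lam_eta (g : Lam) : cd (lam (app (lift 0 g) (var 0))) = cd g := by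
  have h : ∃ g', app (lift 0 g) (var 0) = app (lift 0 g') (var 0) := ⟨g, rfl⟩
  rw [cd, dif_pos h]
  exact congrArg cd (lift_injective 0 (app.inj h.choose_spec).1).symm

theorem cd_lam {a : Lam} (ha : ¬∃ g, a = app (lift 0 g) (var 0)) : cd (lam a) = lam (cd a) := by
  rw [cd, dif_neg ha]

theorem exists_eta_of_lift {a : Lam} {d : Nat} (h : ∃ g, lift (d + 1) a = app (lift 0 g) (var 0)) :
    ∃ g, a = app (lift 0 g) (var 0) := by
  obtain ⟨g, hg⟩ := h
  rcases a with _ | ⟨f, k | _ | _⟩ | _ <;>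
    simp only [lift, reduceCtorEq, app.injEq, var.injEq, and_false] at hg
  obtain rfl : k = 0 := by grind
  obtain ⟨g', rfl, -⟩ := lift_succ_eq_lift (Nat.zero_le d) hg.1
  exact ⟨g', rfl⟩

theorem cd_lift (t : Lam) (d : Nat) : cd (lift d t) = lift d (cd t) := by
  fun_induction cd t generalizing d with
  | case1 n => rw [lift, cd]
  | case2 b s ihs ihb =>
    rw [lift, lift, cd_app_lam, ihs, ihb, lift_subst_of_ge _ _ (Nat.zero_le d)]
  | case3 t s ht iht ihs =>
    have ht' : ∀ b, lift d t ≠ lam b := by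
      intro b hb; cases t <;> simp only [lift, reduceCtorEq] at hb; exact ht _ rfl
    rw [lift, cd_app ht', iht, ihs, lift]
  | case4 a h ih =>
    obtain hg := h.choose_spec
    generalize h.choose = g at hg ih
    subst hg
    rw [lift, lift, lift, if_pos (Nat.succ_pos d), ← lift_lift g (Nat.zero_le d), cd_lam_eta, ih]
  | case5 a ha ih =>
    have ha' : ¬∃ g, lift (d + 1) a = app (lift 0 g) (var 0) := fun h => ha (exists_eta_of_lift h)
    rw [lift, cd_lam ha', ih, lift]

theorem subst_cd_eta (r s : Lam) :
    subst 0 (cd s) (cd (app (lift 0 r) (var 0))) = cd (app r s) := by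
  by_cases hr : ∃ x, r = lam x
  · obtain ⟨x, rfl⟩ := hr
    rw [lift, cd_app_lam, cd_app_lam, cd_lift, cd, subst_var_lift_succ]
  · have hr' : ∀ x, lift 0 r ≠ lam x := by
      intro x hx; cases r <;> simp only [lift, reduceCtorEq] at hx; exact hr ⟨_, rfl⟩
    rw [cd_app hr', cd_app (fun x hx => hr ⟨x, hx⟩), cd_lift, cd, subst, subst, subst_lift]
    rfl

theorem par_cd {t u : Lam} (h : Par t u) : Par u (cd t) := by
  cases h with
  | var n => rw [cd]; exact .var n
  | @app a a' b b' ha hb =>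
    by_cases hlam : ∃ x, a = lam x
    · obtain ⟨x, rfl⟩ := hlam
      rw [cd_app_lam]
      cases ha with
      | lam hx => exact .beta (par_cd hx) (par_cd hb)
      -- an η-redex in function position: `(λz. r z) b` develops like `r b`
      | eta hr => rw [subst_cd_eta]; exact par_cd (Par.app hr hb)
    · rw [cd_app (fun x hx => hlam ⟨x, hx⟩)]
      exact .app (par_cd ha) (par_cd hb)
  | beta ht hs => rw [cd_app_lam]; exact (par_cd ht).subst (par_cd hs) 0
  | @lam a a' ha =>
    by_cases hη : ∃ g, a = app (lift 0 g) (var 0)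
    · obtain ⟨g, rfl⟩ := hη
      rw [cd_lam_eta]
      generalize hf : lift 0 g = f at ha
      cases ha with
      | app hg h0 =>
        cases h0
        subst hf
        obtain ⟨g', rfl, hg'⟩ := hg.lift_inv
        exact .eta (par_cd hg')
      | beta hp h0 =>
        -- here `g = λ g₀`, and contracting the β-redex `g↑ z` yields the η-contractum `g` itself
        cases h0
        obtain ⟨g, rfl⟩ : ∃ g₀, g = lam g₀ := by
          cases g <;> simp only [lift, reduceCtorEq] at hf; exact ⟨_, rfl⟩
        cases hf
        obtain ⟨g', rfl, hg⟩ := hp.lift_inv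
        rw [subst_var_lift_succ]
        exact par_cd (.lam hg)
    · rw [cd_lam hη]
      exact .lam (par_cd ha)
  | eta hr => rw [cd_lam_eta]; exact par_cd hr
termination_by size t
decreasing_by all_goals subst_vars; simp only [size, size_lift]; omega

theorem Par.diamond {a b c : Lam} (hb : Par a b) (hc : Par a c) : ∃ d, Par b d ∧ Par c d :=
  ⟨cd a, par_cd hb, par_cd hc⟩

theorem equivalence_join_par : Equivalence (Relation.Join (Relation.ReflTransGen Par)) :=
  Relation.equivalence_join_reflTransGen fun _ _ _ hb hc =>
    let ⟨d, hbd, hcd⟩ := hb.diamond hc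
    ⟨d, .single hbd, .single hcd⟩

theorem reflTransGen_par_app {a a' b b' : Lam} (ha : Relation.ReflTransGen Par a a')
    (hb : Relation.ReflTransGen Par b b') :
    Relation.ReflTransGen Par (app a b) (app a' b') :=
  (ha.lift (app · b) fun _ _ h => .app h (.refl b)).trans
    (hb.lift (app a') fun _ _ h => .app (.refl a') h)

theorem reflTransGen_par_lam {a a' : Lam} (h : Relation.ReflTransGen Par a a') :
    Relation.ReflTransGen Par (lam a) (lam a') :=
  h.lift lam fun _ _ => .lam

theorem BetaEta.join_par {t s : Lam} (h : t =βη s) :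
    Relation.Join (Relation.ReflTransGen Par) t s := by
  induction h with
  | beta t s => exact ⟨_, .single (.beta (.refl t) (.refl s)), .refl⟩
  | eta t => exact ⟨t, .single (.eta (.refl t)), .refl⟩
  | refl t => exact equivalence_join_par.refl t
  | symm _ ih => exact equivalence_join_par.symm ih
  | trans _ _ ih₁ ih₂ => exact equivalence_join_par.trans ih₁ ih₂
  | congApp _ _ ih₁ ih₂ =>
    obtain ⟨w₁, h₁, h₁'⟩ := ih₁
    obtain ⟨w₂, h₂, h₂'⟩ := ih₂
    exact ⟨app w₁ w₂, reflTransGen_par_app h₁ h₂, reflTransGen_par_app h₁' h₂'⟩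
  | congLam _ ih =>
    obtain ⟨w, h, h'⟩ := ih
    exact ⟨lam w, reflTransGen_par_lam h, reflTransGen_par_lam h'⟩

mutual

inductive Neutral : Lam → Prop
  | var (n : Nat) : Neutral (var n)
  | app {t s : Lam} : Neutral t → Normal s → Neutral (app t s)

inductive Normal : Lam → Prop
  | neutral {t : Lam} : Neutral t → Normal t
  | lam {t : Lam} : Normal t → (∀ g, t ≠ app (lift 0 g) (var 0)) → Normal (lam t)

end

theorem Par.eq_of_normal {t u : Lam} (h : Par t u) (ht : Normal t) : u = t := by
  induction h with
  | var n => rfl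
  | app _ _ iha ihb =>
    rcases ht with ⟨⟨⟩ | ⟨ha, hb⟩⟩
    rw [iha (.neutral ha), ihb hb]
  | lam _ ih =>
    rcases ht with ⟨⟨⟩⟩ | ⟨ha, -⟩
    rw [ih ha]
  | beta _ _ =>
    obtain ⟨⟨⟩ | ⟨⟨⟩, -⟩⟩ := ht
  | eta _ =>
    rcases ht with ⟨⟨⟩⟩ | ⟨-, hη⟩
    exact absurd rfl (hη _)

theorem eq_of_reflTransGen_par_of_normal {t u : Lam} (h : Relation.ReflTransGen Par t u)
    (ht : Normal t) : u = t := by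
  induction h with
  | refl => rfl
  | tail _ hvu ih => subst ih; exact hvu.eq_of_normal ht

theorem BetaEta.eq_of_normal {t u : Lam} (h : t =βη u) (ht : Normal t) (hu : Normal u) :
    t = u :=
  let ⟨_, htw, huw⟩ := h.join_par
  (eq_of_reflTransGen_par_of_normal htw ht).symm.trans (eq_of_reflTransGen_par_of_normal huw hu)

theorem BetaEta.beta_of_eq {t s u : Lam} (h : subst 0 s t = u) : app (lam t) s =βη u :=
  h ▸ .beta t s

theorem BetaEta.npow (e : Lam) (n : Nat) {a b : Lam} (h : a =βη b) :
    npow e n a =βη npow e n b := by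
  induction n with
  | zero => exact h
  | succ n ih => exact .congApp (.refl e) ih

/-- `Tₙ = λx y. (x y)ⁿ (λz. x z (y z))`. -/
def sNormalForm (n : Nat) : Lam :=
  lam (lam (npow (app (var 1) (var 0)) n (lam (app (app (var 2) (var 0)) (app (var 1) (var 0))))))

theorem sNormalForm_zero : sNormalForm 0 = S := rfl

theorem lift_sNormalForm (d n : Nat) : lift d (sNormalForm n) = sNormalForm n := by
  simp [sNormalForm, lift, lift_npow]

theorem betaEta_sNormalForm_app_app (n : Nat) (x y : Lam) :
    app (app (sNormalForm n) x) y =βη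
      npow (app x y) n (lam (app (app (lift 0 x) (var 0)) (app (lift 0 y) (var 0)))) :=
  .trans (.congApp (.beta _ x) (.refl y)) <| .beta_of_eq <| by
    simp [subst, subst_npow, lift_lift x (le_refl 0)]

theorem lift_S (d : Nat) : lift d S = S := lift_sNormalForm d 0

theorem betaEta_S_S_sNormalForm (n : Nat) :
    app (app S S) (sNormalForm n) =βη sNormalForm (n + 1) := by
  -- `S S Tₙ =βη λz. S z (Tₙ z) =βη λz w. z w (Tₙ z w) =βη λz w. z w ((z w)ⁿ (λv. z v (w v)))`
  have h₁ := betaEta_sNormalForm_app_app 0 S (sNormalForm n)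
  have h₂ := betaEta_sNormalForm_app_app 0 (var 0) (app (sNormalForm n) (var 0))
  have h₃ := betaEta_sNormalForm_app_app n (var 1) (var 0)
  simp only [npow, lift, lift_S, lift_sNormalForm, sNormalForm_zero] at h₁ h₂ h₃
  exact h₁.trans (.congLam (h₂.trans (.congLam (.congApp (.refl _) h₃))))

theorem betaEta_npow_S_S_sNormalForm (m n : Nat) :
    npow (app S S) m (sNormalForm n) =βη sNormalForm (n + m) := by
  induction m with
  | zero => exact .refl _
  | succ m ih => exact (BetaEta.congApp (.refl _) ih).trans (betaEta_S_S_sNormalForm (n + m))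

theorem betaEta_sNormalForm_S_S (n : Nat) :
    app (app (sNormalForm n) S) S =βη sNormalForm (n + 1) := by
  have h := betaEta_sNormalForm_app_app n S S
  have h₀ := betaEta_sNormalForm_app_app 0 S S
  simp only [npow, lift_S, sNormalForm_zero] at h h₀
  rw [Nat.add_comm]
  calc app (app (sNormalForm n) S) S
    _ =βη npow (app S S) n (app (app S S) (sNormalForm 0)) := h.trans (.npow _ n h₀.symm)
    _ =βη npow (app S S) n (sNormalForm 1) := .npow _ n (betaEta_S_S_sNormalForm 0)
    _ =βη sNormalForm (1 + n) := betaEta_npow_S_S_sNormalForm n 1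

theorem sNormalForm_injective : Function.Injective sNormalForm := fun a b h => by
  have := congrArg size h
  simp only [sNormalForm, size, size_npow] at this
  omega

theorem normal_npow {e a : Lam} (he : Neutral e) (ha : Normal a) (n : Nat) :
    Normal (npow e n a) := by
  induction n with
  | zero => exact ha
  | succ n ih => exact .neutral (.app he ih)

theorem normal_sNormalForm (n : Nat) : Normal (sNormalForm n) := by
  refine .lam (.lam (normal_npow (.app (.var 1) (.neutral (.var 0))) ?_ n) ?_) (by simp)
  · exact .lam (.neutral (.app (.app (.var 2) (.neutral (.var 0)))
      (.neutral (.app (.var 1) (.neutral (.var 0)))))) (by simp)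
  · rcases n with _ | _ | n <;> simp [npow]

theorem betaEta_sapp_S_odd (n : Nat) : sapp S (2 * n + 1) =βη sNormalForm n := by
  induction n with
  | zero => exact .refl S
  | succ n ih =>
    show app (app (sapp S (2 * n + 1)) S) S =βη _
    exact (BetaEta.congApp (.congApp ih (.refl S)) (.refl S)).trans (betaEta_sNormalForm_S_S n)

theorem sapp_succ (X : Lam) {k : Nat} (hk : 1 ≤ k) : sapp X (k + 1) = app (sapp X k) X := by
  obtain ⟨k, rfl⟩ := Nat.exists_eq_add_of_le' hk
  rfl

theorem BetaEta.sapp_add {X : Lam} {i i' : Nat} (hi : 1 ≤ i) (hi' : 1 ≤ i')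
    (h : sapp X i =βη sapp X i') (m : Nat) : sapp X (i + m) =βη sapp X (i' + m) := by
  induction m with
  | zero => exact h
  | succ m ih =>
    rw [← Nat.add_assoc, ← Nat.add_assoc, sapp_succ X (by omega), sapp_succ X (by omega)]
    exact .congApp ih (.refl X)

theorem BetaEta.sapp_add_mul {X : Lam} {i j : Nat} (hi : 1 ≤ i) (h : sapp X i =βη sapp X (i + j))
    (l : Nat) : sapp X i =βη sapp X (i + l * j) := by
  induction l with
  | zero => rw [Nat.zero_mul, Nat.add_zero]; exact .refl _
  | succ l ih =>
    rw [Nat.succ_mul, ← Nat.add_assoc]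
    exact ih.trans ((Nat.add_right_comm i j (l * j)) ▸ h.sapp_add hi (by omega) (l * j))

theorem S_no_rho :
    (∀ n : Nat, 1 ≤ n →
      BetaEta (sapp S (2 * n + 1))
        (lam (lam (npow (app (var 1) (var 0)) n
          (lam (app (app (var 2) (var 0)) (app (var 1) (var 0)))))))) ∧
    (∀ i j : Nat, 1 ≤ i → 1 ≤ j → ¬ BetaEta (sapp S i) (sapp S (i + j))) := by
  refine ⟨fun n _ => betaEta_sapp_S_odd n, fun i j hi hj h => ?_⟩
  have h' := (h.sapp_add_mul hi 2).sapp_add hi (by omega) (i + 1)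
  rw [show i + (i + 1) = 2 * i + 1 by omega, show i + 2 * j + (i + 1) = 2 * (i + j) + 1 by omega]
    at h'
  have := sNormalForm_injective <| ((betaEta_sapp_S_odd i).symm.trans
    (h'.trans (betaEta_sapp_S_odd (i + j)))).eq_of_normal (normal_sNormalForm _)
    (normal_sNormalForm _)
  omega

end Lam
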